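/- Let n ≥ 3, let G be a simple graph on the vertex set Fin n, and let w be a weight function on n+1 vertices such that w i j = 0 whenever i, j are distinct vertices among the first n vertices that are not adjacent in G. Then ∑_{I ⊆ Fin n} (−1)^{|I|} ∑_{J ∈ π₀(I)} δ_w(J) = 0, where π₀(I) denotes the set of vertex sets of the connected components of the subgraph of G induced on I, and each such J is viewed as a subset of Fin (n+1) via the natural embedding. -/

import Mathlib

/-- A weight function on `m` vertices: symmetric, nonnegative, vanishing on the diagonal. -/
def IsWeight {m : ℕ} (w : Fin m → Fin m → ℝ) : Prop :=
  (∀ i j, w i j = w j i) ∧ (∀ i j, 0 ≤ w i j) ∧ ∀ i, w i i = 0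

/-- The cut function of a weight function: `δ_w(I) = ∑_{i ∈ I} ∑_{j ∉ I} w i j`. -/
def cut {m : ℕ} (w : Fin m → Fin m → ℝ) (I : Finset (Fin m)) : ℝ :=
  ∑ i ∈ I, ∑ j ∈ Iᶜ, w i j

/-- The Bell vector `β_{ij}`: value `1` on subsets containing exactly one of `i, j`, else `0`. -/
def bell {m : ℕ} (i j : Fin m) (I : Finset (Fin m)) : ℝ :=
  if Xor (i ∈ I) (j ∈ I) then 1 else 0

open Classical in
/-- The vertex set of the connected component of `v` in the subgraph of `G` induced on
the vertex set `I`: all `u ∈ I` reachable from `v` by a path staying inside `I`. -/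
noncomputable def compOf {n : ℕ} (G : SimpleGraph (Fin n)) (I : Finset (Fin n))
    (v : Fin n) : Finset (Fin n) :=
  I.filter (fun u => Relation.ReflTransGen (fun a b => a ∈ I ∧ b ∈ I ∧ G.Adj a b) v u)

/-- `π₀(I)`: the set of vertex sets of the connected components of the subgraph of `G`
induced on `I`. -/
noncomputable def pi0 {n : ℕ} (G : SimpleGraph (Fin n)) (I : Finset (Fin n)) :
    Finset (Finset (Fin n)) :=
  I.image (compOf G I)

/-!
If `w` vanishes between distinct non-adjacent vertices, then no weight runs between two
different components of the subgraph induced on `I`, so the cuts of the components add up to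
the cut of `I` itself. The alternating sum of `I ↦ δ_w(I)` vanishes: each term `w i j` of the
cut only sees whether `i` and `j` lie in `I`, and since `n ≥ 3` there is a third vertex whose
insertion or removal flips the sign without changing the term.
-/

theorem Finset.sum_neg_one_pow_card_mul_eq_zero {α R : Type*} [Fintype α] [DecidableEq α]
    [CommRing R] (f : Finset α → R) (c : α) (hf : ∀ I, c ∉ I → f (insert c I) = f I) :
    ∑ I : Finset α, (-1 : R) ^ I.card * f I = 0 := by
  rw [← Finset.powerset_univ, ← Finset.insert_erase (Finset.mem_univ c),
    Finset.sum_powerset_insert (Finset.notMem_erase c _), ← Finset.sum_add_distrib]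
  refine Finset.sum_eq_zero fun I hI => ?_
  have hc : c ∉ I := fun h => Finset.notMem_erase c _ (Finset.mem_powerset.1 hI h)
  rw [hf I hc, Finset.card_insert_of_notMem hc, pow_succ]
  ring

theorem cut_eq_sum_ite {m : ℕ} (w : Fin m → Fin m → ℝ) (S : Finset (Fin m)) :
    cut w S = ∑ i, ∑ j, if i ∈ S ∧ j ∉ S then w i j else 0 := by
  simp only [ite_and, Finset.sum_ite_irrel, Finset.sum_const_zero, ← Finset.sum_filter,
    Finset.filter_mem_eq_inter, Finset.univ_inter, ← Finset.compl_filter, cut]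

theorem sum_neg_one_pow_card_mul_cut_map {α : Type*} [Fintype α] {m : ℕ}
    (hα : 3 ≤ Fintype.card α) (e : α ↪ Fin m) (w : Fin m → Fin m → ℝ) :
    ∑ I : Finset α, (-1 : ℝ) ^ I.card * cut w (I.map e) = 0 := by
  classical
  simp_rw [cut_eq_sum_ite, Finset.mul_sum]
  rw [Finset.sum_comm]
  refine Finset.sum_eq_zero fun i _ => ?_
  rw [Finset.sum_comm]
  refine Finset.sum_eq_zero fun j _ => ?_
  obtain ⟨_, hc, hcij⟩ : ∃ x ∈ Finset.univ.map e, x ∉ ({i, j} : Finset (Fin m)) := by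
    refine Finset.exists_mem_notMem_of_card_lt_card ?_
    rw [Finset.card_map, Finset.card_univ]
    exact Finset.card_le_two.trans_lt (by omega)
  obtain ⟨c, -, rfl⟩ := Finset.mem_map.1 hc
  refine Finset.sum_neg_one_pow_card_mul_eq_zero _ c fun I _ => ?_
  simp only [Finset.mem_insert, Finset.mem_singleton, not_or] at hcij
  simp [Finset.map_insert, Ne.symm hcij.1, Ne.symm hcij.2]

section Components

variable {n : ℕ} {G : SimpleGraph (Fin n)} {I : Finset (Fin n)} {u v a b : Fin n}

theorem mem_compOf :
    u ∈ compOf G I v ↔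
      u ∈ I ∧ Relation.ReflTransGen (fun a b => a ∈ I ∧ b ∈ I ∧ G.Adj a b) v u := by
  classical
  exact Finset.mem_filter

theorem compOf_subset : compOf G I v ⊆ I := fun _ hu => (mem_compOf.1 hu).1

theorem mem_compOf_self (hv : v ∈ I) : v ∈ compOf G I v :=
  mem_compOf.2 ⟨hv, .refl⟩

theorem mem_compOf_of_adj (ha : a ∈ compOf G I v) (hb : b ∈ I) (hab : G.Adj a b) :
    b ∈ compOf G I v :=
  have ⟨haI, hva⟩ := mem_compOf.1 ha
  mem_compOf.2 ⟨hb, hva.tail ⟨haI, hb, hab⟩⟩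

theorem compOf_eq_of_mem (hu : u ∈ compOf G I v) : compOf G I u = compOf G I v := by
  obtain ⟨-, hvu⟩ := mem_compOf.1 hu
  have huv : Relation.ReflTransGen (fun a b => a ∈ I ∧ b ∈ I ∧ G.Adj a b) u v :=
    Relation.ReflTransGen.mono (fun _ _ h => ⟨h.2.1, h.1, h.2.2.symm⟩) u v hvu.swap
  ext x
  simp only [mem_compOf]
  exact and_congr_right fun _ => ⟨hvu.trans, huv.trans⟩

theorem sum_pi0_sum {M : Type*} [AddCommMonoid M] (F : Finset (Fin n) → Fin n → M) :
    ∑ J ∈ pi0 G I, ∑ a ∈ J, F J a = ∑ a ∈ I, F (compOf G I a) a := by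
  refine Finset.sum_image' (fun a => F (compOf G I a) a) fun a ha => ?_
  have hfiber : I.filter (compOf G I · = compOf G I a) = compOf G I a := by
    ext x
    simp only [Finset.mem_filter]
    exact ⟨fun ⟨hxI, hx⟩ => hx ▸ mem_compOf_self hxI, fun hx =>
      ⟨compOf_subset hx, compOf_eq_of_mem hx⟩⟩
  rw [hfiber]
  exact Finset.sum_congr rfl fun x hx => by rw [compOf_eq_of_mem hx]

theorem sum_cut_map_pi0 {m : ℕ} (e : Fin n ↪ Fin m) (w : Fin m → Fin m → ℝ)
    (hGw : ∀ i j, i ≠ j → ¬ G.Adj i j → w (e i) (e j) = 0) :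
    ∑ J ∈ pi0 G I, cut w (J.map e) = cut w (I.map e) := by
  -- A vertex of `I` outside the component of `a` is neither `a` nor adjacent to it.
  have hcomp : ∀ a ∈ I,
      ∑ j ∈ ((compOf G I a).map e)ᶜ, w (e a) j = ∑ j ∈ (I.map e)ᶜ, w (e a) j := by
    intro a ha
    refine (Finset.sum_subset (Finset.compl_subset_compl.2
      (Finset.map_subset_map.2 compOf_subset)) fun j hj hjI => ?_).symm
    obtain ⟨b, hb, rfl⟩ := Finset.mem_map.1 (by simpa using hjI)
    have hbc : b ∉ compOf G I a := by simpa using hj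
    exact hGw a b (by rintro rfl; exact hbc (mem_compOf_self ha))
      fun hab => hbc (mem_compOf_of_adj (mem_compOf_self ha) hb hab)
  simp only [cut, Finset.sum_map]
  rw [sum_pi0_sum fun J a => ∑ j ∈ (J.map e)ᶜ, w (e a) j]
  exact Finset.sum_congr rfl hcomp

end Components

theorem graph_constrained_entropy_equality_general (n : ℕ) (hn : 3 ≤ n)
    (G : SimpleGraph (Fin n)) (w : Fin (n + 1) → Fin (n + 1) → ℝ)
    (hGw : ∀ i j : Fin n, i ≠ j → ¬ G.Adj i j → w (Fin.castSucc i) (Fin.castSucc j) = 0) :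
    ∑ I : Finset (Fin n), (-1 : ℝ) ^ I.card *
      ∑ J ∈ pi0 G I, cut w (J.map ⟨Fin.castSucc, Fin.castSucc_injective n⟩) = 0 := by
  simp_rw [sum_cut_map_pi0 ⟨Fin.castSucc, Fin.castSucc_injective n⟩ w hGw]
  exact sum_neg_one_pow_card_mul_cut_map (by rwa [Fintype.card_fin]) _ w

/-- constrained entropy equalities from graphs. Let `G` be a simple
graph on `Fin n` (`n ≥ 3`) and `w` a weight function on `n+1` vertices vanishing between
distinct non-adjacent vertices among the first `n`. Then
`∑_{I ⊆ Fin n} (−1)^{|I|} ∑_{J ∈ π₀(I)} δ_w(J) = 0`. -/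
theorem graph_constrained_entropy_equality (n : ℕ) (hn : 3 ≤ n)
    (G : SimpleGraph (Fin n)) (w : Fin (n + 1) → Fin (n + 1) → ℝ) (hw : IsWeight w)
    (hGw : ∀ i j : Fin n, i ≠ j → ¬ G.Adj i j → w (Fin.castSucc i) (Fin.castSucc j) = 0) :
    ∑ I : Finset (Fin n), (-1 : ℝ) ^ I.card *
      ∑ J ∈ pi0 G I, cut w (J.map ⟨Fin.castSucc, Fin.castSucc_injective n⟩) = 0 :=
  graph_constrained_entropy_equality_general n hn G w hGw
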